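/- Let R(x) = e^{−f(x)} be a probability density on ℝ^d with f 1-strongly convex, L-smooth, and global minimum at 0, and let Q₀ = N(0, I_d). Then D_{1+1/L}(Q₀ ‖ R) ≤ (dL ln L)/2. -/

import Mathlib

open MeasureTheory Real

/-- The α-Rényi divergence between two probability densities on `ℝ^d`. -/
noncomputable def renyiDiv {d : ℕ} (α : ℝ) (μ ν : EuclideanSpace ℝ (Fin d) → ℝ) : ℝ :=
  (α - 1)⁻¹ * Real.log (∫ x, μ x ^ α * ν x ^ (1 - α))

/-- Density of the isotropic Gaussian `N(m, σ²I_d)` on `ℝ^d`. -/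
noncomputable def gaussDensity {d : ℕ} (σ2 : ℝ) (m : EuclideanSpace ℝ (Fin d)) :
    EuclideanSpace ℝ (Fin d) → ℝ :=
  fun x => (2 * π * σ2) ^ (-(d : ℝ) / 2) * Real.exp (-‖x - m‖ ^ 2 / (2 * σ2))

/-!
Along each ray from the critical point `0`, the Hessian bounds sandwich `f` between
`f 0 + ‖x‖² / 2` and `f 0 + L‖x‖² / 2`. The lower bound together with `∫ e^{-f} = 1` forces
`f 0 ≤ (d / 2) log 2π`. For `α = 1 + 1/L` the Rényi integrand is
`Q₀^α R^{1-α} = (2π)^{-αd/2} exp (-α‖x‖² / 2 + f x / L)`, and the upper bound dominates it by a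
Gaussian of variance `L`, whose integral gives
`L log ∫ Q₀^α R^{1-α} ≤ f 0 - (d / 2) log 2π + (d L / 2) log L`.
-/

lemma le_add_half_of_deriv2_le {φ φ' φ'' : ℝ → ℝ} {c : ℝ}
    (hφ : ∀ t, HasDerivAt φ (φ' t) t) (hφ' : ∀ t, HasDerivAt φ' (φ'' t) t)
    (hφ'' : ∀ t, φ'' t ≤ c) (h₀ : φ' 0 = 0) : φ 1 ≤ φ 0 + c / 2 := by
  have hg : ∀ t, HasDerivAt (fun t => c * t ^ 2 / 2 - φ t) (c * t - φ' t) t := fun t =>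
    ((((hasDerivAt_pow 2 t).const_mul c).div_const 2).sub (hφ t)).congr_deriv (by ring)
  have hg' : ∀ t, HasDerivAt (fun t => c * t - φ' t) (c - φ'' t) t := fun t =>
    (((hasDerivAt_id' t).const_mul c).sub (hφ' t)).congr_deriv (by ring)
  have hconvex : ConvexOn ℝ Set.univ (fun t => c * t ^ 2 / 2 - φ t) := by
    refine convexOn_of_hasDerivWithinAt2_nonneg convex_univ
      (fun t _ => (hg t).continuousAt.continuousWithinAt) (fun t _ => (hg t).hasDerivWithinAt)
      (fun t _ => (hg' t).hasDerivWithinAt) (fun t _ => sub_nonneg.2 (hφ'' t))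
  have := hconvex.le_slope_of_hasDerivAt (Set.mem_univ 0) (Set.mem_univ 1) one_pos (hg 0)
  simp only [slope_def_field, h₀] at this
  linarith

lemma add_half_le_of_le_deriv2 {φ φ' φ'' : ℝ → ℝ} {c : ℝ}
    (hφ : ∀ t, HasDerivAt φ (φ' t) t) (hφ' : ∀ t, HasDerivAt φ' (φ'' t) t)
    (hφ'' : ∀ t, c ≤ φ'' t) (h₀ : φ' 0 = 0) : φ 0 + c / 2 ≤ φ 1 := by
  have := le_add_half_of_deriv2_le (φ := -φ) (c := -c) (fun t => (hφ t).neg)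
    (fun t => (hφ' t).neg) (fun t => neg_le_neg (hφ'' t)) (by simp [h₀])
  simp only [Pi.neg_apply] at this
  linarith

section InnerProductSpace

variable {E : Type*} [NormedAddCommGroup E] [InnerProductSpace ℝ E] [CompleteSpace E]
  {f : E → ℝ}

lemma hasDerivAt_apply_smul (hf : Differentiable ℝ f) (x : E) (t : ℝ) :
    HasDerivAt (fun t : ℝ => f (t • x)) (inner ℝ (gradient f (t • x)) x) t :=
  ((hf (t • x)).hasFDerivAt.comp_hasDerivAt t ((hasDerivAt_id' t).smul_const x)).congr_deriv
    (by rw [one_smul, gradient, InnerProductSpace.toDual_symm_apply])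

lemma hasDerivAt_inner_gradient_smul (hf : Differentiable ℝ (gradient f)) (x : E) (t : ℝ) :
    HasDerivAt (fun t : ℝ => inner ℝ (gradient f (t • x)) x)
      (inner ℝ (fderiv ℝ (gradient f) (t • x) x) x) t := by
  have := (hf (t • x)).hasFDerivAt.comp_hasDerivAt t ((hasDerivAt_id t).smul_const x)
  simpa using this.inner ℝ (hasDerivAt_const t x)

lemma differentiable_gradient (hf : ContDiff ℝ 2 f) : Differentiable ℝ (gradient f) :=
  (InnerProductSpace.toDual ℝ E).symm.toContinuousLinearEquiv.differentiable.comp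
    ((hf.fderiv_right le_rfl).differentiable one_ne_zero)

lemma add_mul_norm_sq_div_two_le_of_le_hessian {m : ℝ} (hf : ContDiff ℝ 2 f)
    (hm : ∀ x v : E, m * ‖v‖ ^ 2 ≤ inner ℝ (fderiv ℝ (gradient f) x v) v)
    (hcrit : gradient f 0 = 0) (x : E) : f 0 + m * ‖x‖ ^ 2 / 2 ≤ f x := by
  simpa [real_inner_self_eq_norm_sq] using add_half_le_of_le_deriv2
    (hasDerivAt_apply_smul (hf.differentiable two_ne_zero) x)
    (hasDerivAt_inner_gradient_smul (differentiable_gradient hf) x)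
    (fun t => hm (t • x) x) (by simp [hcrit])

lemma le_add_mul_norm_sq_div_two_of_hessian_le {M : ℝ} (hf : ContDiff ℝ 2 f)
    (hM : ∀ x v : E, inner ℝ (fderiv ℝ (gradient f) x v) v ≤ M * ‖v‖ ^ 2)
    (hcrit : gradient f 0 = 0) (x : E) : f x ≤ f 0 + M * ‖x‖ ^ 2 / 2 := by
  simpa using le_add_half_of_deriv2_le
    (hasDerivAt_apply_smul (hf.differentiable two_ne_zero) x)
    (hasDerivAt_inner_gradient_smul (differentiable_gradient hf) x)
    (fun t => hM (t • x) x) (by simp [hcrit])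

end InnerProductSpace

section Gaussian

variable {V : Type*} [NormedAddCommGroup V] [InnerProductSpace ℝ V] [FiniteDimensional ℝ V]
  [MeasurableSpace V] [BorelSpace V] {φ : V → ℝ} {K b : ℝ}

lemma integrable_rexp_neg_mul_sq_norm (hb : 0 < b) :
    Integrable (fun v : V => rexp (-b * ‖v‖ ^ 2)) := by
  have := (GaussianFourier.integrable_cexp_neg_mul_sq_norm_add (V := V)
    (b := (b : ℂ)) (by simpa using hb) 0 0).re
  convert this using 2 with v
  simp [← Complex.ofReal_pow, ← Complex.ofReal_neg, ← Complex.ofReal_mul, Complex.exp_ofReal_re]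

lemma log_integral_exp_le (hφ : AEStronglyMeasurable φ) (hb : 0 < b)
    (hle : ∀ v, φ v ≤ K - b * ‖v‖ ^ 2) :
    log (∫ v, rexp (φ v)) ≤ K + Module.finrank ℝ V / 2 * log (π / b) := by
  have hdom : ∀ v, rexp (φ v) ≤ rexp K * rexp (-b * ‖v‖ ^ 2) := fun v => by
    rw [← exp_add]; exact exp_le_exp.2 (by linarith [hle v])
  have hint : Integrable (fun v => rexp (φ v)) :=
    ((integrable_rexp_neg_mul_sq_norm hb).const_mul _).mono'
      (continuous_exp.comp_aestronglyMeasurable hφ)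
      (.of_forall fun v => by rw [norm_of_nonneg (exp_pos _).le]; exact hdom v)
  rw [log_le_iff_le_exp (integral_exp_pos hint), exp_add, mul_comm _ (log _), exp_mul,
    exp_log (by positivity), ← GaussianFourier.integral_rexp_neg_mul_sq_norm hb,
    ← integral_const_mul]
  exact integral_mono hint ((integrable_rexp_neg_mul_sq_norm hb).const_mul _) hdom

end Gaussian

lemma gaussDensity_eq_exp {d : ℕ} {σ2 : ℝ} (hσ2 : 0 < σ2) (m x : EuclideanSpace ℝ (Fin d)) :
    gaussDensity σ2 m x = rexp (-(d / 2) * log (2 * π * σ2) - ‖x - m‖ ^ 2 / (2 * σ2)) := by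
  rw [gaussDensity, rpow_def_of_pos (by positivity), ← exp_add]
  ring_nf

section Potential

variable {d : ℕ} {f : EuclideanSpace ℝ (Fin d) → ℝ} {L : ℝ}

lemma renyiDiv_gaussDensity_exp_neg :
    renyiDiv (1 + 1 / L) (gaussDensity 1 0) (fun x => rexp (-f x)) =
      L * log (∫ x, rexp ((1 + 1 / L) * (-(d / 2) * log (2 * π) - ‖x‖ ^ 2 / 2) + f x / L)) := by
  rw [renyiDiv, show (1 + 1 / L - 1)⁻¹ = L by simp]
  congr 3 with x
  rw [gaussDensity_eq_exp one_pos, ← exp_mul, ← exp_mul, ← exp_add]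
  simp only [mul_one, sub_zero]
  ring_nf

lemma apply_zero_le_of_integral_exp_neg_eq_one (hfc : Continuous f)
    (hlower : ∀ x, f 0 + ‖x‖ ^ 2 / 2 ≤ f x) (hprob : ∫ x, rexp (-f x) = 1) :
    f 0 ≤ d / 2 * log (2 * π) := by
  have := log_integral_exp_le (φ := fun x => -f x) (K := -f 0) (b := 1 / 2)
    hfc.neg.aestronglyMeasurable one_half_pos fun x => by linarith [hlower x]
  rw [hprob, log_one, finrank_euclideanSpace_fin, show π / (1 / 2) = 2 * π by ring] at this
  linarith

lemma renyiDiv_gaussDensity_exp_neg_le (hL : 0 < L) (hfc : Continuous f)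
    (hupper : ∀ x, f x ≤ f 0 + L * ‖x‖ ^ 2 / 2) :
    renyiDiv (1 + 1 / L) (gaussDensity 1 0) (fun x => rexp (-f x)) ≤
      f 0 - d / 2 * log (2 * π) + d * L * log L / 2 := by
  have hlog := log_integral_exp_le
    (φ := fun x => (1 + 1 / L) * (-(d / 2) * log (2 * π) - ‖x‖ ^ 2 / 2) + f x / L)
    (K := (1 + 1 / L) * (-(d / 2) * log (2 * π)) + f 0 / L) (b := 1 / (2 * L))
    (by fun_prop) (by positivity) fun x => by
      have : f x / L ≤ f 0 / L + ‖x‖ ^ 2 / 2 := by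
        field_simp
        linarith [hupper x]
      linear_combination this
  rw [finrank_euclideanSpace_fin, show π / (1 / (2 * L)) = 2 * π * L by field_simp,
    log_mul (by positivity) hL.ne'] at hlog
  rw [renyiDiv_gaussDensity_exp_neg]
  calc _ ≤ L * ((1 + 1 / L) * (-(d / 2) * log (2 * π)) + f 0 / L +
        d / 2 * (log (2 * π) + log L)) := mul_le_mul_of_nonneg_left hlog hL.le
    _ = _ := by
      field_simp
      ring

end Potential

/-- If `R = e^{-f}` is a probability density with `f` 1-strongly convex, `L`-smooth,
with global minimum at `0`, and `Q₀ = N(0, I_d)`, then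
`D_{1+1/L}(Q₀ ‖ R) ≤ dL ln L / 2`. -/
theorem renyiDiv_init_target_le {d : ℕ} (L : ℝ) (f : EuclideanSpace ℝ (Fin d) → ℝ)
    (hf : ContDiff ℝ 2 f)
    (hconv : ∀ x v : EuclideanSpace ℝ (Fin d),
      ‖v‖ ^ 2 ≤ (inner ℝ (fderiv ℝ (gradient f) x v) v : ℝ))
    (hsmooth : ∀ x v : EuclideanSpace ℝ (Fin d),
      (inner ℝ (fderiv ℝ (gradient f) x v) v : ℝ) ≤ L * ‖v‖ ^ 2)
    (hmin : gradient f 0 = 0)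
    (hprob : ∫ x, Real.exp (-f x) = 1) :
    renyiDiv (1 + 1 / L) (gaussDensity 1 (0 : EuclideanSpace ℝ (Fin d)))
        (fun x => Real.exp (-f x)) ≤ (d : ℝ) * L * Real.log L / 2 := by
  rcases Nat.eq_zero_or_pos d with rfl | hd
  · simp_all [renyiDiv, gaussDensity, volume_euclideanSpace_eq_dirac]
  have hL : 0 < L := by
    have : Nonempty (Fin d) := ⟨⟨0, hd⟩⟩
    obtain ⟨v, hv⟩ := exists_ne (0 : EuclideanSpace ℝ (Fin d))
    have hv2 : 0 < ‖v‖ ^ 2 := pow_pos (norm_pos_iff.2 hv) 2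
    nlinarith [(hconv 0 v).trans (hsmooth 0 v)]
  have hlower : ∀ x, f 0 + ‖x‖ ^ 2 / 2 ≤ f x := fun x => by
    simpa using add_mul_norm_sq_div_two_le_of_le_hessian (m := 1) hf (by simpa using hconv) hmin x
  linarith [apply_zero_le_of_integral_exp_neg_eq_one hf.continuous hlower hprob,
    renyiDiv_gaussDensity_exp_neg_le hL hf.continuous
      (le_add_mul_norm_sq_div_two_of_hessian_le hf hsmooth hmin)]
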